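/- arXiv:2204.08912 — 7 statements merged into one kernel-verified Lean document; each statement's English description precedes it below -/
import Mathlib

section
/- Let A be an associative algebra over a field k equipped with a derivation d : A → A. Define two new bilinear operations on A by x ≺ y = x·d(y) and x ≻ y = d(x)·y. Then for all x, y, z ∈ A the following identities hold: (i) x ≻ (y ≺ z) = (x ≻ y) ≺ z, and (ii) (x ≺ y) ≻ z − x ≻ (y ≻ z) = x ≺ (y ≻ z) − (x ≺ y) ≺ z. -/
/-- If `A` is an associative algebra over a field `k` with a derivation `d`,
then the derived operations `x ≺ y = x * d y` and `x ≻ y = d x * y` satisfy the two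
defining identities of noncommutative Novikov algebras. -/
theorem stmt_0 (k : Type*) [Field k] (A : Type*) [Ring A] [Algebra k A]
    (d : A →ₗ[k] A) (hd : ∀ x y : A, d (x * y) = d x * y + x * d y)
    (prec succ : A → A → A)
    (hprec : ∀ x y : A, prec x y = x * d y)
    (hsucc : ∀ x y : A, succ x y = d x * y) :
    (∀ x y z : A, succ x (prec y z) = prec (succ x y) z) ∧
    (∀ x y z : A,
      succ (prec x y) z - succ x (succ y z) = prec x (succ y z) - prec (prec x y) z) := by
  constructor
  · intro x y z
    simp only [hsucc, hprec, mul_assoc]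
  · intro x y z
    simp only [hsucc, hprec, hd]
    noncomm_ring
end

section
/- Let D be a noncommutative Novikov algebra (DAs-algebra) over a field k, i.e., a k-vector space with two bilinear operations ≺ and ≻ satisfying x ≻ (y ≺ z) = (x ≻ y) ≺ z and (x ≺ y) ≻ z − x ≻ (y ≻ z) = x ≺ (y ≻ z) − (x ≺ y) ≺ z. Then for all x, y, z, b ∈ D the identity (x ≺ y, z, b)_≺ = (x, y ≻ z, b)_≺ holds, where (a,b,c)_≺ = (a ≺ b) ≺ c − a ≺ (b ≺ c). -/
/-- In any noncommutative Novikov algebra (DAs-algebra), the identity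
`(x ≺ y, z, b)_≺ = (x, y ≻ z, b)_≺` holds, where
`(a,b,c)_≺ = (a ≺ b) ≺ c − a ≺ (b ≺ c)`. -/
theorem stmt_2 (k : Type*) [Field k] (D : Type*) [AddCommGroup D] [Module k D]
    (prec succ : D →ₗ[k] D →ₗ[k] D)
    (h1 : ∀ x y z : D, succ x (prec y z) = prec (succ x y) z)
    (h2 : ∀ x y z : D,
      succ (prec x y) z - succ x (succ y z) = prec x (succ y z) - prec (prec x y) z) :
    ∀ x y z b : D,
      prec (prec (prec x y) z) b - prec (prec x y) (prec z b)
        = prec (prec x (succ y z)) b - prec x (prec (succ y z) b) := by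
  intro x y z b
  have A := congrArg (fun t : D => prec t b) (h2 x y z)
  simp only [map_sub, LinearMap.sub_apply] at A
  -- A : prec (succ (prec x y) z) b - prec (succ x (succ y z)) b
  --     = prec (prec x (succ y z)) b - prec (prec (prec x y) z) b
  have B := h2 x y (prec z b)
  rw [h1 y z b] at B
  -- B : succ (prec x y) (prec z b) - succ x (prec (succ y z) b)
  --     = prec x (prec (succ y z) b) - prec (prec x y) (prec z b)
  rw [h1 (prec x y) z b, h1 x (succ y z) b] at B
  -- now B has the same LHS as A
  have C : prec (prec x (succ y z)) b - prec (prec (prec x y) z) b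
      = prec x (prec (succ y z) b) - prec (prec x y) (prec z b) := A.symm.trans B
  rw [sub_eq_sub_iff_add_eq_add] at C ⊢
  exact (add_comm _ _).trans C.symm
end

section
/- Let D be a noncommutative Novikov algebra (DAs-algebra) over a field k, i.e., a k-vector space with two bilinear operations ≺ and ≻ satisfying x ≻ (y ≺ z) = (x ≻ y) ≺ z and (x ≺ y) ≻ z − x ≻ (y ≻ z) = x ≺ (y ≻ z) − (x ≺ y) ≺ z. Then for all x, y, z, b ∈ D the identity (x, y ≺ z, b)_≻ = (x, y, z ≻ b)_≻ holds, where (a,b,c)_≻ = (a ≻ b) ≻ c − a ≻ (b ≻ c). -/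
/-- In any noncommutative Novikov algebra (DAs-algebra), the identity
`(x, y ≺ z, b)_≻ = (x, y, z ≻ b)_≻` holds, where
`(a,b,c)_≻ = (a ≻ b) ≻ c − a ≻ (b ≻ c)`. -/
theorem stmt_3 (k : Type*) [Field k] (D : Type*) [AddCommGroup D] [Module k D]
    (prec succ : D →ₗ[k] D →ₗ[k] D)
    (h1 : ∀ x y z : D, succ x (prec y z) = prec (succ x y) z)
    (h2 : ∀ x y z : D,
      succ (prec x y) z - succ x (succ y z) = prec x (succ y z) - prec (prec x y) z) :
    ∀ x y z b : D,
      succ (succ x (prec y z)) b - succ x (succ (prec y z) b)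
        = succ (succ x y) (succ z b) - succ x (succ y (succ z b)) := by
  intro x y z b
  have e1 : succ (prec (succ x y) z) b
      = (prec (succ x y) (succ z b) - prec (prec (succ x y) z) b)
        + succ (succ x y) (succ z b) :=
    eq_add_of_sub_eq (h2 (succ x y) z b)
  have e2 : succ (prec y z) b
      = (prec y (succ z b) - prec (prec y z) b) + succ y (succ z b) :=
    eq_add_of_sub_eq (h2 y z b)
  rw [h1 x y z, e1, e2, map_add, map_sub, h1 x y (succ z b), h1 x (prec y z) b, h1 x y z]
  abel
end

section
/- Let n ≥ 3, let a₁, …, aₙ ∈ ℂ be pairwise distinct complex numbers, let a = diag(a₁, …, aₙ) ∈ Mₙ(ℂ), and let d : Mₙ(ℂ) → Mₙ(ℂ) be the inner derivation d(x) = a·x − x·a. Define x ≺ y = x·d(y) and x ≻ y = d(x)·y on Mₙ(ℂ). Then Mₙ(ℂ) with the operations ≺, ≻ is a simple algebra: if J is a ℂ-linear subspace of Mₙ(ℂ) with J ≠ 0 such that j ≺ x ∈ J, x ≺ j ∈ J, j ≻ x ∈ J, and x ≻ j ∈ J for all j ∈ J and x ∈ Mₙ(ℂ), then J = Mₙ(ℂ).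 -/
open Matrix

/-- For `n ≥ 3` and pairwise distinct `a₁, …, aₙ ∈ ℂ`, the matrix algebra
`Mₙ(ℂ)` with the operations `x ≺ y = x·d(y)`, `x ≻ y = d(x)·y` derived from the inner
derivation `d(x) = a·x − x·a` (with `a = diag(a₁,…,aₙ)`) is a simple algebra. -/
theorem stmt_4 (n : ℕ) (hn : 3 ≤ n) (a : Fin n → ℂ) (ha : Function.Injective a)
    (d : Matrix (Fin n) (Fin n) ℂ → Matrix (Fin n) (Fin n) ℂ)
    (hd : ∀ x, d x = Matrix.diagonal a * x - x * Matrix.diagonal a)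
    (prec succ : Matrix (Fin n) (Fin n) ℂ → Matrix (Fin n) (Fin n) ℂ →
      Matrix (Fin n) (Fin n) ℂ)
    (hprec : ∀ x y, prec x y = x * d y)
    (hsucc : ∀ x y, succ x y = d x * y)
    (J : Submodule ℂ (Matrix (Fin n) (Fin n) ℂ)) (hJ : J ≠ ⊥)
    (h1 : ∀ j ∈ J, ∀ x, prec j x ∈ J)
    (h2 : ∀ j ∈ J, ∀ x, prec x j ∈ J)
    (h3 : ∀ j ∈ J, ∀ x, succ j x ∈ J)
    (h4 : ∀ j ∈ J, ∀ x, succ x j ∈ J) :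
    J = ⊤ := by
  -- derivation on matrix units
  have hE : ∀ k l : Fin n, d (Matrix.single k l 1) = (a k - a l) • Matrix.single k l 1 := by
    intro k l
    rw [hd]
    ext i m
    by_cases h : i = k ∧ m = l
    · obtain ⟨rfl, rfl⟩ := h
      simp [sub_mul, mul_sub]
    · have h0 : Matrix.single k l (1:ℂ) i m = 0 :=
        Matrix.single_apply_of_ne _ _ _ _ _ (fun ⟨h1, h2⟩ => h ⟨h1.symm, h2.symm⟩)
      simp [h0]
  have hsub : ∀ k l : Fin n, k ≠ l → a k - a l ≠ 0 := fun k l h =>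
    sub_ne_zero.mpr (fun he => h (ha he))
  -- closure under right mult by offdiag unit
  have mulE : ∀ j ∈ J, ∀ k l : Fin n, k ≠ l → j * Matrix.single k l 1 ∈ J := by
    intro j hj k l hkl
    have h := h1 j hj (Matrix.single k l 1)
    rw [hprec, hE, Matrix.mul_smul] at h
    have := J.smul_mem (a k - a l)⁻¹ h
    rwa [inv_smul_smul₀ (hsub k l hkl)] at this
  -- closure under left mult by offdiag unit
  have Emul : ∀ j ∈ J, ∀ k l : Fin n, k ≠ l → Matrix.single k l 1 * j ∈ J := by
    intro j hj k l hkl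
    have h := h4 j hj (Matrix.single k l 1)
    rw [hsucc, hE, Matrix.smul_mul] at h
    have := J.smul_mem (a k - a l)⁻¹ h
    rwa [inv_smul_smul₀ (hsub k l hkl)] at this
  -- key product computation
  have keymul : ∀ (M : Matrix (Fin n) (Fin n) ℂ) (k p q l : Fin n),
      Matrix.single k p 1 * M * Matrix.single q l 1 = M p q • Matrix.single k l 1 := by
    intro M k p q l
    ext i m
    rcases eq_or_ne i k with rfl | hi
    · rcases eq_or_ne m l with rfl | hm
      · simp [mul_assoc]
      · simp [mul_assoc, hm, Ne.symm hm]
    · simp [mul_assoc, hi, Ne.symm hi]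
  -- get nonzero element
  obtain ⟨j, hjJ, hj0⟩ := (Submodule.ne_bot_iff J).mp hJ
  obtain ⟨p, hp⟩ : ∃ p, j p ≠ 0 := by
    by_contra h; push_neg at h; exact hj0 (by ext i m; simp [h i])
  obtain ⟨q, hq⟩ : ∃ q, j p q ≠ 0 := by
    by_contra h; push_neg at h; exact hp (funext h)
  have : Nontrivial (Fin n) := Fin.nontrivial_iff_two_le.mpr (by omega)
  -- base: E k l ∈ J for k ≠ p, l ≠ q
  have base : ∀ k l : Fin n, k ≠ p → l ≠ q → Matrix.single k l 1 ∈ J := by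
    intro k l hk hl
    have h1' := mulE _ (Emul j hjJ k p hk) q l (Ne.symm hl)
    rw [keymul] at h1'
    have := J.smul_mem (j p q)⁻¹ h1'
    rwa [inv_smul_smul₀ hq] at this
  -- fill row p (l ≠ q)
  have rowp : ∀ l : Fin n, l ≠ q → Matrix.single p l 1 ∈ J := by
    intro l hl
    obtain ⟨k, hk⟩ := exists_ne p
    have := Emul _ (base k l hk hl) p k (Ne.symm hk)
    rwa [Matrix.single_mul_single_same, one_mul] at this
  -- all units
  have allE : ∀ k l : Fin n, Matrix.single k l 1 ∈ J := by
    intro k l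
    by_cases hl : l = q
    · obtain ⟨l', hl'⟩ : ∃ l', l' ≠ q := exists_ne q
      have hkl' : Matrix.single k l' 1 ∈ J := by
        by_cases hk : k = p
        · subst hk; exact rowp l' hl'
        · exact base k l' hk hl'
      have := mulE _ hkl' l' q hl'
      rw [Matrix.single_mul_single_same, one_mul] at this
      rwa [hl]
    · by_cases hk : k = p
      · subst hk; exact rowp l hl
      · exact base k l hk hl
  -- conclude
  rw [eq_top_iff]
  intro M _
  rw [matrix_eq_sum_single M]
  refine Submodule.sum_mem J fun i _ => Submodule.sum_mem J fun m _ => ?_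
  have : Matrix.single i m (M i m) = M i m • Matrix.single i m 1 := by
    rw [Matrix.smul_single, smul_eq_mul, mul_one]
  rw [this]
  exact J.smul_mem _ (allE i m)
end

section
/- Let X be a linearly ordered set. For a word u = (n₁,x₁)(n₂,x₂)…(n_k,x_k) over the alphabet ℕ × X (representing the differential monomial x₁^{(n₁)}…x_k^{(n_k)}), define its potential pt(u) = Σᵢ t^{nᵢ} ∈ ℤ[t], and define the order u ≪ v to hold iff either pt(u) ≠ pt(v) and the leading coefficient of pt(v) − pt(u) is positive, or pt(u) = pt(v) and u < v in the lexicographic order on words over ℕ × X (pairs compared lexicographically). Then: (i) the length |u| equals pt(u) evaluated at t = 1; (ii) for all words u, v, pt(uv) = pt(u) + pt(v), where uv is concatenation; and (iii) the order ≪ is monomial, i.e., u₁ ≪ u₂ implies u₁v ≪ u₂v and vu₁ ≪ vu₂ for every word v. -/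
open Polynomial

/-- The potential of a word over `ℕ × X`: `pt((n₁,x₁)…(n_k,x_k)) = Σᵢ t^{nᵢ} ∈ ℤ[t]`. -/
noncomputable def pt {X : Type*} (u : List (ℕ × X)) : Polynomial ℤ :=
  (u.map (fun p => (Polynomial.X : Polynomial ℤ) ^ p.1)).sum

/-- The order `≪` on words over `ℕ × X`: `u ≪ v` iff either the leading coefficient of
`pt(v) − pt(u)` is positive, or `pt(u) = pt(v)` and `u < v` lexicographically
(pairs in `ℕ × X` compared lexicographically). -/
def llt {X : Type*} [LinearOrder X] (u v : List (ℕ × X)) : Prop :=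
  0 < (pt v - pt u).leadingCoeff ∨
    (pt u = pt v ∧ List.Lex (Prod.Lex (· < ·) (· < ·)) u v)

lemma pt_append {X : Type*} (u v : List (ℕ × X)) : pt (u ++ v) = pt u + pt v := by
  simp [pt, List.map_append, List.sum_append]

lemma len_eval {X : Type*} (u : List (ℕ × X)) : (u.length : ℤ) = (pt u).eval 1 := by
  induction u with
  | nil => simp [pt]
  | cons a t ih => simp [pt, List.map_cons, List.sum_cons] at ih ⊢; omega

lemma lex_append_left {α : Type*} (r : α → α → Prop) (a : List α) {u v : List α}
    (h : List.Lex r u v) : List.Lex r (a ++ u) (a ++ v) := by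
  induction a with
  | nil => simpa using h
  | cons x t ih => exact List.Lex.cons ih

lemma lex_append_right {α : Type*} (r : α → α → Prop) {u v : List α} (w : List α)
    (h : List.Lex r u v) (hl : u.length = v.length) :
    List.Lex r (u ++ w) (v ++ w) := by
  induction h with
  | nil => simp at hl
  | cons h ih => exact List.Lex.cons (ih (by simpa using hl))
  | rel h => exact List.Lex.rel h

/-- Properties of the potential and of the order `≪`:
(i) the length of `u` equals `pt(u)` evaluated at `t = 1`;
(ii) `pt(uv) = pt(u) + pt(v)`;
(iii) `≪` is a monomial order: `u₁ ≪ u₂` implies `u₁v ≪ u₂v` and `vu₁ ≪ vu₂`. -/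
theorem stmt_5 (X : Type*) [LinearOrder X] :
    (∀ u : List (ℕ × X), (u.length : ℤ) = (pt u).eval 1) ∧
    (∀ u v : List (ℕ × X), pt (u ++ v) = pt u + pt v) ∧
    (∀ u₁ u₂ v : List (ℕ × X), llt u₁ u₂ →
      llt (u₁ ++ v) (u₂ ++ v) ∧ llt (v ++ u₁) (v ++ u₂)) := by
  refine ⟨len_eval, pt_append, fun u₁ u₂ v h => ?_⟩
  rcases h with h | ⟨hpt, hlex⟩
  · constructor
    · left; rw [pt_append, pt_append]; ring_nf; ring_nf at h; exact h
    · left; rw [pt_append, pt_append]; ring_nf; ring_nf at h; exact h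
  · have hlen : u₁.length = u₂.length := by
      have h1 := len_eval u₁; have h2 := len_eval u₂
      rw [hpt] at h1; omega
    constructor
    · right
      exact ⟨by rw [pt_append, pt_append, hpt], lex_append_right _ v hlex hlen⟩
    · right
      exact ⟨by rw [pt_append, pt_append, hpt], lex_append_left _ v hlex⟩
end

section
/- Let l be a list of natural numbers with weight wt(l) = −m where m ≥ 1, where the weight of a list [n₁, …, n_k] is (n₁ + … + n_k) − k ∈ ℤ. Then l can be written as a concatenation l = l₁ ++ l₂ ++ … ++ l_m of m lists, each satisfying wt(lᵢ) = −1. -/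
/-- Auxiliary: if a list has weight `≤ -k` with `k ≥ 1`, it has a prefix of
weight exactly `-k`. -/
lemma stmt_7_aux : ∀ (l : List ℕ) (k : ℕ), 1 ≤ k →
    (l.sum : ℤ) - l.length ≤ -(k : ℤ) →
    ∃ p s : List ℕ, l = p ++ s ∧ (p.sum : ℤ) - p.length = -(k : ℤ) := by
  intro l
  induction l with
  | nil => intro k hk h; simp at h; omega
  | cons a t ih =>
    intro k hk h
    by_cases hak : a = 0 ∧ k = 1
    · refine ⟨[a], t, rfl, ?_⟩
      simp [hak.1, hak.2]
    · have hka : 1 ≤ k + a - 1 := by omega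
      have ht : (t.sum : ℤ) - t.length ≤ -((k + a - 1 : ℕ) : ℤ) := by
        simp at h
        push_cast
        omega
      obtain ⟨p, s, hps, hp⟩ := ih (k + a - 1) hka ht
      refine ⟨a :: p, s, by simp [hps], ?_⟩
      simp at hp ⊢
      omega

/-- If a list of natural numbers has weight `−m` with `m ≥ 1`
(`wt([n₁,…,n_k]) = Σᵢ nᵢ − k`), then it is a concatenation of `m` lists,
each of weight `−1`. -/
theorem stmt_7 (l : List ℕ) (m : ℕ) (hm : 1 ≤ m)
    (h : (l.sum : ℤ) - l.length = -(m : ℤ)) :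
    ∃ ls : List (List ℕ), ls.length = m ∧ ls.flatten = l ∧
      ∀ li ∈ ls, (li.sum : ℤ) - li.length = -1 := by
  induction m generalizing l with
  | zero => omega
  | succ n ih =>
    rcases Nat.eq_zero_or_pos n with hn | hn
    · subst hn
      refine ⟨[l], by simp, by simp, ?_⟩
      intro li hli
      simp at hli
      subst hli
      simpa using h
    · obtain ⟨p, s, hps, hp⟩ := stmt_7_aux l 1 le_rfl (by rw [h]; push_cast; omega)
      have hs : (s.sum : ℤ) - s.length = -(n : ℤ) := by
        subst hps
        simp at h
        push_cast at h hp ⊢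
        omega
      obtain ⟨ls, hlen, hflat, hall⟩ := ih s hn hs
      refine ⟨p :: ls, by simp [hlen], by simp [hflat, hps], ?_⟩
      intro li hli
      rcases List.mem_cons.mp hli with rfl | hli
      · simpa using hp
      · exact hall li hli
end

section
/- Let l = [n₁, …, n_k] be a list of natural numbers with weight wt(l) = −1, where wt([n₁,…,n_k]) = (n₁ + … + n_k) − k ∈ ℤ. Suppose there exist indices i < j with nᵢ > 0 and n_j > 0. Then l contains a proper contiguous sublist (infix) v with length |v| > 1 and wt(v) = −1. -/
/-- Prefix weight: `S8 l t = wt (l.take t)` (valid for `t ≤ l.length`). -/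
def S8 (l : List ℕ) (t : ℕ) : ℤ := ((l.take t).sum : ℤ) - t

lemma S8_zero (l : List ℕ) : S8 l 0 = 0 := by simp [S8]

lemma S8_last (l : List ℕ) : S8 l l.length = (l.sum : ℤ) - l.length := by
  simp [S8]

lemma S8_succ (l : List ℕ) (t : ℕ) (h : t < l.length) :
    S8 l (t + 1) = S8 l t + (l[t]'h : ℤ) - 1 := by
  simp only [S8, List.sum_take_succ _ _ h]
  push_cast
  ring

lemma S8_step_ge (l : List ℕ) (t : ℕ) (h : t < l.length) :
    S8 l t - 1 ≤ S8 l (t + 1) := by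
  rw [S8_succ l t h]
  have : (0 : ℤ) ≤ (l[t]'h : ℤ) := Int.ofNat_nonneg _
  linarith

lemma S8_up (l : List ℕ) (t : ℕ) (h : t < l.length) (hpos : 0 < l[t]'h) :
    S8 l t ≤ S8 l (t + 1) := by
  rw [S8_succ l t h]
  have : (1 : ℤ) ≤ (l[t]'h : ℤ) := by exact_mod_cast hpos
  linarith

/-- First downward crossing: if `S8` is above `c` at `t₀` and at most `c` at `t₁ ≤ l.length`,
then there is a first `b ∈ (t₀, t₁]` with `S8 l b = c`. -/
lemma S8_cross (l : List ℕ) (c : ℤ) (t₀ t₁ : ℕ) (h01 : t₀ ≤ t₁) (h1k : t₁ ≤ l.length)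
    (h0 : c < S8 l t₀) (h1 : S8 l t₁ ≤ c) :
    ∃ b, t₀ < b ∧ b ≤ t₁ ∧ S8 l b = c := by
  classical
  have hex : ∃ t, t₀ ≤ t ∧ S8 l t ≤ c := ⟨t₁, h01, h1⟩
  set b := Nat.find hex with hbdef
  have hb : t₀ ≤ b ∧ S8 l b ≤ c := Nat.find_spec hex
  have hble : b ≤ t₁ := Nat.find_min' hex ⟨h01, h1⟩
  have hbt0 : t₀ < b := by
    rcases lt_or_eq_of_le hb.1 with h' | h'
    · exact h'
    · exact absurd hb.2 (by rw [← h']; exact not_le.2 h0)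
  clear_value b
  obtain ⟨b', rfl⟩ : ∃ b', b = b' + 1 := ⟨b - 1, by omega⟩
  have hprev : ¬(t₀ ≤ b' ∧ S8 l b' ≤ c) := Nat.find_min hex (show b' < Nat.find hex by omega)
  have ht0b' : t₀ ≤ b' := by omega
  have hcb' : c < S8 l b' := by
    by_contra hcon
    exact hprev ⟨ht0b', le_of_not_gt hcon⟩
  have hb'k : b' < l.length := by omega
  have hstep := S8_step_ge l b' hb'k
  exact ⟨b' + 1, hbt0, hble, le_antisymm hb.2 (by linarith)⟩

/-- Build the conclusion from indices `a + 2 ≤ b ≤ l.length` with `S8 l b = S8 l a - 1`,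
where `0 < a` or `b < l.length` (properness). -/
lemma S8_build (l : List ℕ) (a b : ℕ) (h2 : a + 2 ≤ b) (hbk : b ≤ l.length)
    (hp : 0 < a ∨ b < l.length) (hw : S8 l b = S8 l a - 1) :
    ∃ u v w : List ℕ, l = u ++ v ++ w ∧ v ≠ l ∧ 1 < v.length ∧
      (v.sum : ℤ) - v.length = -1 := by
  refine ⟨l.take a, (l.take b).drop a, l.drop b, ?_, ?_, ?_, ?_⟩
  · have h1 : (l.take b).take a = l.take a := by
      rw [List.take_take, min_eq_left (by omega)]
    have hA : List.take a l ++ List.drop a (List.take b l) = List.take b l := by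
      rw [← h1, List.take_append_drop]
    rw [hA, List.take_append_drop]
  · have hlen : ((l.take b).drop a).length = b - a := by
      simp [List.length_drop, List.length_take, min_eq_left hbk]
    intro hcon
    have : b - a = l.length := by rw [← hlen, hcon]
    omega
  · have hlen : ((l.take b).drop a).length = b - a := by
      simp [List.length_drop, List.length_take, min_eq_left hbk]
    rw [hlen]; omega
  · have h1 : (l.take b).take a = l.take a := by
      rw [List.take_take, min_eq_left (by omega)]
    have hsplit : l.take a ++ (l.take b).drop a = l.take b := by
      rw [← h1, List.take_append_drop]
    have hsum : (l.take a).sum + ((l.take b).drop a).sum = (l.take b).sum := by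
      rw [← List.sum_append, hsplit]
    have hlen : ((l.take b).drop a).length = b - a := by
      simp [List.length_drop, List.length_take, min_eq_left hbk]
    simp only [S8] at hw
    rw [hlen]
    have hc : (((l.take b).drop a).sum : ℤ) = ((l.take b).sum : ℤ) - ((l.take a).sum : ℤ) := by
      omega
    have hcast : ((b - a : ℕ) : ℤ) = (b : ℤ) - (a : ℤ) := by omega
    rw [hc, hcast]
    linarith

/-- If a list `l = [n₁,…,n_k]` of naturals has weight `−1`
(`wt = Σᵢ nᵢ − k`) and there are two positions `i < j` with `nᵢ > 0` and `n_j > 0`,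
then `l` contains a proper infix `v` with `|v| > 1` and `wt(v) = −1`. -/
theorem stmt_8 (l : List ℕ) (h : (l.sum : ℤ) - l.length = -1)
    (i j : ℕ) (hij : i < j) (hj : j < l.length)
    (hi0 : 0 < l[i]'(hij.trans hj)) (hj0 : 0 < l[j]'hj) :
    ∃ u v w : List ℕ, l = u ++ v ++ w ∧ v ≠ l ∧ 1 < v.length ∧
      (v.sum : ℤ) - v.length = -1 := by
  have hk : S8 l l.length = -1 := by rw [S8_last]; exact h
  have hupj : S8 l j ≤ S8 l (j + 1) := S8_up l j hj hj0
  have hi : i < l.length := hij.trans hj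
  have hupi : S8 l i ≤ S8 l (i + 1) := S8_up l i hi hi0
  rcases le_or_gt 0 (S8 l j) with hsj | hsj
  · -- Case 1: S8 l j ≥ 0. Cut from j down to S8 l j - 1.
    obtain ⟨b, hb1, hb2, hb3⟩ := S8_cross l (S8 l j - 1) j l.length (le_of_lt hj)
      le_rfl (by linarith) (by rw [hk]; linarith)
    have hbj2 : j + 2 ≤ b := by
      rcases Nat.lt_or_ge b (j + 2) with h' | h'
      · exfalso
        have : b = j + 1 := by omega
        rw [this] at hb3
        linarith
      · exact h'
    exact S8_build l j b hbj2 hb2 (Or.inl (by omega)) hb3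
  · -- Case 2: S8 l j ≤ -1.
    have hsj' : S8 l j ≤ -1 := by omega
    obtain ⟨b₁, hb11, hb12, hb13⟩ := S8_cross l (-1) 0 j (Nat.zero_le _) (le_of_lt hj)
      (by rw [S8_zero]; norm_num) hsj'
    rcases Nat.lt_or_ge b₁ 2 with hb1lt | hb1ge
    · -- b₁ = 1 : leading zero, S8 l 1 = -1
      have hb1 : b₁ = 1 := by omega
      rw [hb1] at hb13
      have hi1 : 1 ≤ i := by
        by_contra hcon
        have hi0' : i = 0 := by omega
        subst hi0'
        have := S8_up l 0 hi hi0
        rw [S8_zero] at this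
        linarith
      rcases le_or_gt 0 (S8 l (i + 1)) with hsi1 | hsi1
      · -- 2b-ii : S8 l (i+1) ≥ 0, first return to -1 after i+1 lands before j+1 ≤ length
        have hij1 : i + 1 ≤ j := hij
        obtain ⟨b, hb1', hb2', hb3'⟩ := S8_cross l (-1) (i + 1) j hij1 (le_of_lt hj)
          (by linarith) hsj'
        refine S8_build l 0 b (by omega) (by omega) (Or.inr (by omega)) ?_
        rw [S8_zero, hb3']; norm_num
      · -- 2b-i : S8 l (i+1) ≤ -1
        have hsi1' : S8 l (i + 1) ≤ -1 := by omega
        rcases eq_or_lt_of_le hsi1' with heq | hlt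
        · -- S8 l (i+1) = -1 exactly: prefix of length i+1 works
          refine S8_build l 0 (i + 1) (by omega) (by omega) (Or.inr (by omega)) ?_
          rw [S8_zero]
          omega
        · -- S8 l (i+1) ≤ -2: cut (a, i+1] with S8 l a = S8 l (i+1) + 1
          have hsle : S8 l i ≤ S8 l (i + 1) + 1 := by linarith
          obtain ⟨a, ha1, ha2, ha3⟩ := S8_cross l (S8 l (i + 1) + 1) 0 i (Nat.zero_le _)
            (le_of_lt hi) (by rw [S8_zero]; linarith) hsle
          have hane : a ≠ i := by
            intro hcon
            rw [hcon] at ha3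
            linarith
          refine S8_build l a (i + 1) (by omega) (by omega) (Or.inl ha1) ?_
          rw [ha3]; ring
    · -- b₁ ≥ 2: prefix of length b₁ works
      refine S8_build l 0 b₁ (by omega) (by omega) (Or.inr (by omega)) ?_
      rw [S8_zero, hb13]; norm_num
end
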